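/- arXiv:2311.18370 — 6 statements merged into one kernel-verified Lean document; each statement's English description precedes it below -/
import Mathlib

section
/- Let Ω ⊆ ℝ^n × ℝ^m be locally closed at (∞, ȳ) for some ȳ ∈ ℝ^m. Then the normal cone N_Ω(∞, ȳ) equals the set of all ξ ∈ ℝ^n × ℝ^m for which there exist sequences (x_k, y_k) ∈ Ω with ‖x_k‖ → ∞ and y_k → ȳ, and ξ_k ∈ N_Ω(x_k, y_k) with ξ_k → ξ. In other words, in the definition of N_Ω(∞, ȳ) the regular normal cones may equivalently be replaced by the limiting normal cones. -/
open Filter Topology Set Metric Pointwise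
open scoped RealInnerProductSpace ENNReal

noncomputable section

variable {E F G : Type*}
  [NormedAddCommGroup E] [InnerProductSpace ℝ E]
  [NormedAddCommGroup F] [InnerProductSpace ℝ F]
  [NormedAddCommGroup G] [InnerProductSpace ℝ G]

/-- The regular (Fréchet) normal cone to a subset of a product of inner product
spaces, at a point `p` (empty if `p ∉ Ω`). -/
def frechetNormalCone2 (Ω : Set (E × F)) (p : E × F) : Set (E × F) :=
  {ξ | p ∈ Ω ∧ ∀ ε > (0:ℝ), ∀ᶠ q in nhdsWithin p Ω,
      ⟪ξ.1, q.1 - p.1⟫ + ⟪ξ.2, q.2 - p.2⟫ ≤ ε * ‖q - p‖}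

/-- The limiting (Mordukhovich) normal cone. -/
def limitingNormalCone2 (Ω : Set (E × F)) (p : E × F) : Set (E × F) :=
  {ξ | ∃ pk : ℕ → E × F, ∃ ξk : ℕ → E × F,
    (∀ k, pk k ∈ Ω) ∧ Tendsto pk atTop (𝓝 p) ∧
    (∀ k, ξk k ∈ frechetNormalCone2 Ω (pk k)) ∧ Tendsto ξk atTop (𝓝 ξ)}

/-- The normal cone to `Ω ⊆ E × F` at `(∞, ȳ)`. -/
def normalConeAtInfty (Ω : Set (E × F)) (ybar : F) : Set (E × F) :=
  {ξ | ∃ pk : ℕ → E × F, ∃ ξk : ℕ → E × F,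
    (∀ k, pk k ∈ Ω) ∧ Tendsto (fun k => ‖(pk k).1‖) atTop atTop ∧
    Tendsto (fun k => (pk k).2) atTop (𝓝 ybar) ∧
    (∀ k, ξk k ∈ frechetNormalCone2 Ω (pk k)) ∧ Tendsto ξk atTop (𝓝 ξ)}

/-- `Ω ⊆ E × F` is locally closed at `(∞, ȳ)`. -/
def LocallyClosedAtInfty (Ω : Set (E × F)) (ybar : F) : Prop :=
  ∃ R > (0:ℝ), ∃ V ∈ 𝓝 ybar, IsClosed V ∧
    IsClosed (Ω ∩ {p : E × F | R ≤ ‖p.1‖ ∧ p.2 ∈ V})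

/-- Graph of a set-valued mapping. -/
def svGraph (S : E → Set F) : Set (E × F) := {p | p.2 ∈ S p.1}

/-- Jelonek set of a set-valued mapping. -/
def jelonek (S : E → Set F) : Set F :=
  {y | ∃ xk : ℕ → E, ∃ yk : ℕ → F,
    Tendsto (fun k => ‖xk k‖) atTop atTop ∧ (∀ k, yk k ∈ S (xk k)) ∧
    Tendsto yk atTop (𝓝 y)}

/-- Coderivative of a set-valued mapping at a point of its graph. -/
def coderiv (S : E → Set F) (x : E) (y : F) (v : F) : Set E :=
  {u | (u, -v) ∈ limitingNormalCone2 (svGraph S) (x, y)}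

/-- Coderivative of a set-valued mapping at `(∞, ȳ)`. -/
def coderivAtInfty (S : E → Set F) (ybar : F) (v : F) : Set E :=
  {u | (u, -v) ∈ normalConeAtInfty (svGraph S) ybar}

/-- Regular normal cone, one-space version. -/
def frechetNormalCone1 (Ω : Set E) (x : E) : Set E :=
  {ξ | x ∈ Ω ∧ ∀ ε > (0:ℝ), ∀ᶠ x' in nhdsWithin x Ω, ⟪ξ, x' - x⟫ ≤ ε * ‖x' - x‖}

/-- Normal cone at infinity to an unbounded subset of `E`. -/
def normalConeAtInfty1 (Ω : Set E) : Set E :=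
  {ξ | ∃ xk : ℕ → E, ∃ ξk : ℕ → E, (∀ k, xk k ∈ Ω) ∧
    Tendsto (fun k => ‖xk k‖) atTop atTop ∧
    (∀ k, ξk k ∈ frechetNormalCone1 Ω (xk k)) ∧ Tendsto ξk atTop (𝓝 ξ)}

/-- Epigraph of an extended-real-valued function. -/
def epiSet (f : E → EReal) : Set (E × ℝ) := {p | f p.1 ≤ (p.2 : EReal)}

/-- Graph of an extended-real-valued function, as a subset of `E × ℝ`. -/
def gphFun (f : E → EReal) : Set (E × ℝ) := {p | f p.1 = (p.2 : EReal)}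

/-- Jelonek set of a function. -/
def jelonekFun (f : E → EReal) : Set ℝ :=
  {y | ∃ xk : ℕ → E, Tendsto (fun k => ‖xk k‖) atTop atTop ∧
    Tendsto (fun k => f (xk k)) atTop (𝓝 (y : EReal))}

/-- Limiting subdifferential of `f` at `x` (empty outside `dom f`). -/
def limSubdiff (f : E → EReal) (x : E) : Set E :=
  {u | ∃ r : ℝ, f x = (r : EReal) ∧
    (u, (-1 : ℝ)) ∈ limitingNormalCone2 (epiSet f) (x, r)}

/-- Limiting subdifferential of `f` at `(∞, ȳ)`. -/
def limSubdiffAtInfty (f : E → EReal) (ybar : ℝ) : Set E :=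
  {u | (u, (-1 : ℝ)) ∈ normalConeAtInfty (epiSet f) ybar}

/-- Singular subdifferential of `f` at `(∞, ȳ)`. -/
def singSubdiffAtInfty (f : E → EReal) (ybar : ℝ) : Set E :=
  {u | (u, (0 : ℝ)) ∈ normalConeAtInfty (epiSet f) ybar}

/-- Inverse of a set-valued mapping. -/
def svInv (S : E → Set F) (y : F) : Set E := {x | y ∈ S x}

/-- Preimage `F⁻¹(V) = {x : F(x) ∩ V ≠ ∅}`. -/
def svPreimage (S : E → Set F) (V : Set F) : Set E := {x | (S x ∩ V).Nonempty}

/-- Distance function of a set-valued mapping, with value `+∞` on empty values. -/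
def dSV (S : E → Set F) (p : E × F) : EReal :=
  ((EMetric.infEdist p.2 (S p.1) : ℝ≥0∞) : EReal)

/-- Regular normal cone on `(E × F) × ℝ`. -/
def frechetNormalCone3 (Ω : Set ((E × F) × ℝ)) (p : (E × F) × ℝ) : Set ((E × F) × ℝ) :=
  {ξ | p ∈ Ω ∧ ∀ ε > (0:ℝ), ∀ᶠ q in nhdsWithin p Ω,
      ⟪ξ.1.1, q.1.1 - p.1.1⟫ + ⟪ξ.1.2, q.1.2 - p.1.2⟫ + ξ.2 * (q.2 - p.2)
        ≤ ε * ‖q - p‖}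

/-- Limiting normal cone on `(E × F) × ℝ`. -/
def limitingNormalCone3 (Ω : Set ((E × F) × ℝ)) (p : (E × F) × ℝ) : Set ((E × F) × ℝ) :=
  {ξ | ∃ pk ξk : ℕ → (E × F) × ℝ, (∀ k, pk k ∈ Ω) ∧ Tendsto pk atTop (𝓝 p) ∧
    (∀ k, ξk k ∈ frechetNormalCone3 Ω (pk k)) ∧ Tendsto ξk atTop (𝓝 ξ)}

/-- Limiting subdifferential of the distance function `d_F`. -/
def limSubdiffD (S : E → Set F) (p : E × F) : Set (E × F) :=
  {w | ∃ r : ℝ, dSV S p = (r : EReal) ∧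
    (w, (-1 : ℝ)) ∈ limitingNormalCone3 {q : (E × F) × ℝ | dSV S q.1 ≤ (q.2 : EReal)} (p, r)}

/-- The set `J⁺(F₁ + F₂, y)`. -/
def jplus (S₁ S₂ : E → Set F) (y : F) : Set (F × F) :=
  {q | ∃ xk : ℕ → E, ∃ y1k y2k : ℕ → F,
    Tendsto (fun k => ‖xk k‖) atTop atTop ∧
    (∀ k, y1k k ∈ S₁ (xk k)) ∧ (∀ k, y2k k ∈ S₂ (xk k)) ∧
    Tendsto y1k atTop (𝓝 q.1) ∧ Tendsto y2k atTop (𝓝 q.2) ∧ q.1 + q.2 = y}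

/-- The set `J°(F₂ ∘ F₁, y)`. -/
def jcirc (S₁ : E → Set G) (S₂ : G → Set F) (y : F) : Set G :=
  {z | ∃ xk : ℕ → E, ∃ zk : ℕ → G, ∃ yk : ℕ → F,
    Tendsto (fun k => ‖xk k‖) atTop atTop ∧ (∀ k, zk k ∈ S₁ (xk k)) ∧
    (∀ k, yk k ∈ S₂ (zk k)) ∧ Tendsto zk atTop (𝓝 z) ∧ Tendsto yk atTop (𝓝 y)}

/-- Composition `F₂ ∘ F₁` of set-valued mappings. -/
def svComp (S₂ : G → Set F) (S₁ : E → Set G) (x : E) : Set F :=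
  {y | ∃ z ∈ S₁ x, y ∈ S₂ z}

abbrev Eucl (n : ℕ) := EuclideanSpace ℝ (Fin n)

/-- In the definition of the normal cone `N_Ω(∞, ȳ)`, the regular
normal cones may equivalently be replaced by the limiting normal cones. -/
theorem stmt0 {n m : ℕ} (Ω : Set (Eucl n × Eucl m)) (ybar : Eucl m)
    (h : LocallyClosedAtInfty Ω ybar) :
    normalConeAtInfty Ω ybar =
      {ξ | ∃ pk : ℕ → Eucl n × Eucl m, ∃ ξk : ℕ → Eucl n × Eucl m,
        (∀ k, pk k ∈ Ω) ∧ Tendsto (fun k => ‖(pk k).1‖) atTop atTop ∧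
        Tendsto (fun k => (pk k).2) atTop (𝓝 ybar) ∧
        (∀ k, ξk k ∈ limitingNormalCone2 Ω (pk k)) ∧ Tendsto ξk atTop (𝓝 ξ)} := by
  ext ξ
  constructor
  · rintro ⟨pk, ξk, hmem, hnorm, hy, hfr, hlim⟩
    exact ⟨pk, ξk, hmem, hnorm, hy,
      fun k => ⟨fun _ => pk k, fun _ => ξk k, fun _ => hmem k, tendsto_const_nhds,
        fun _ => hfr k, tendsto_const_nhds⟩, hlim⟩
  · rintro ⟨pk, ξk, hmem, hnorm, hy, hlim, hξ⟩
    choose qk ηk hq hqlim hη hηlim using hlim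
    have key : ∀ k : ℕ, ∃ j, dist (qk k j) (pk k) < 1/(k+1) ∧
        dist (ηk k j) (ξk k) < 1/(k+1) := by
      intro k
      obtain ⟨N1, h1⟩ := (Metric.tendsto_atTop.1 (hqlim k)) (1/(k+1)) (by positivity)
      obtain ⟨N2, h2⟩ := (Metric.tendsto_atTop.1 (hηlim k)) (1/(k+1)) (by positivity)
      exact ⟨max N1 N2, h1 _ (le_max_left _ _), h2 _ (le_max_right _ _)⟩
    choose j hj1 hj2 using key
    have hone : ∀ k : ℕ, (1:ℝ)/(k+1) ≤ 1 := by
      intro k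
      rw [div_le_one (by positivity)]
      linarith [Nat.cast_nonneg (α := ℝ) k]
    have hdist0 : Tendsto (fun k : ℕ => (1:ℝ)/(k+1)) atTop (𝓝 0) :=
      tendsto_one_div_add_atTop_nhds_zero_nat
    have hd1 : Tendsto (fun k => dist (qk k (j k)) (pk k)) atTop (𝓝 0) :=
      squeeze_zero (fun k => dist_nonneg) (fun k => (hj1 k).le) hdist0
    have hd2 : Tendsto (fun k => dist (ηk k (j k)) (ξk k)) atTop (𝓝 0) :=
      squeeze_zero (fun k => dist_nonneg) (fun k => (hj2 k).le) hdist0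
    refine ⟨fun k => qk k (j k), fun k => ηk k (j k), fun k => hq k (j k), ?_, ?_,
      fun k => hη k (j k), ?_⟩
    · refine tendsto_atTop_mono (fun k => ?_) (tendsto_atTop_add_const_right _ (-1) hnorm)
      have h1 : dist ((qk k (j k)).1) ((pk k).1) ≤ dist (qk k (j k)) (pk k) :=
        by rw [Prod.dist_eq]; exact le_max_left _ _
      have h2 : dist ((qk k (j k)).1) ((pk k).1) ≤ 1 := h1.trans ((hj1 k).le.trans (hone k))
      have h3 := abs_dist_sub_le ((qk k (j k)).1) ((pk k).1) 0
      simp only [dist_zero_right] at h3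
      have := (abs_le.1 h3).1
      linarith [h2, this, dist_comm ((qk k (j k)).1) ((pk k).1)]
    · have hdy : Tendsto (fun k => dist ((qk k (j k)).2) ((pk k).2)) atTop (𝓝 0) :=
        squeeze_zero (fun k => dist_nonneg)
          (fun k => (show dist ((qk k (j k)).2) ((pk k).2) ≤ dist (qk k (j k)) (pk k) by rw [Prod.dist_eq]; exact le_max_right _ _).trans (hj1 k).le)
          hdist0
      exact hy.congr_dist (by simpa [dist_comm] using hdy)
    · exact hξ.congr_dist (by simpa [dist_comm] using hd2)
end
end

section
/- Let Ω₁, Ω₂ ⊆ ℝ^n × ℝ^m be locally closed at (∞, ȳ) for some ȳ ∈ ℝ^m, and assume the transversality condition N_{Ω₁}(∞, ȳ) ∩ (−N_{Ω₂}(∞, ȳ)) = {0}. Then Ω₁ ∩ Ω₂ is locally closed at (∞, ȳ), and N_{Ω₁ ∩ Ω₂}(∞, ȳ) ⊆ N_{Ω₁}(∞, ȳ) + N_{Ω₂}(∞, ȳ). -/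
open Filter Topology Set Metric Pointwise
open scoped RealInnerProductSpace ENNReal

noncomputable section

variable {E F G : Type*}
  [NormedAddCommGroup E] [InnerProductSpace ℝ E]
  [NormedAddCommGroup F] [InnerProductSpace ℝ F]
  [NormedAddCommGroup G] [InnerProductSpace ℝ G]

/-!
Near a point `x₀` of `Ω₁ ∩ Ω₂`, a regular normal `ξ` to the intersection is approximately a sum
`ξ₁ + ξ₂` of regular normals to `Ω₁` and `Ω₂` at nearby points. To see this, minimise
`-⟪ξ, u⟫ + M ‖u - x₀‖² + κ ‖u - v‖²` over `(u, v) ∈ Ω₁ × Ω₂` near `(x₀, x₀)`: as `κ → ∞` the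
minimisers merge at a point of `Ω₁ ∩ Ω₂`, which the Fréchet inequality for `ξ` forces close to
`x₀`, and the first-order conditions in `u` and in `v` produce `ξ₁` and `ξ₂`.

Applied along a sequence realising `ξ ∈ N_{Ω₁ ∩ Ω₂}(∞, ȳ)`, this gives regular normals
`ξ₁ₖ, ξ₂ₖ` at points tending to `(∞, ȳ)` with `ξ₁ₖ + ξ₂ₖ → ξ`. If `(ξ₁ₖ)` has a convergent
subsequence, `ξ` splits into limiting normals at infinity. Otherwise `‖ξ₁ₖ‖ → ∞`, and dividing by
`‖ξ₁ₖ‖` yields a unit vector `η ∈ N_{Ω₁}(∞, ȳ)` with `-η ∈ N_{Ω₂}(∞, ȳ)`, which transversality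
rules out.
-/

theorem exists_tendsto_of_isMinOn_penalty {X : Type*} [NormedAddCommGroup X] {C₁ C₂ : Set X}
    (hC₁ : IsCompact C₁) (hC₂ : IsClosed C₂) {f : X → ℝ} (hf : Continuous f) {u v : ℕ → X}
    (huv : ∀ k, (u k, v k) ∈ C₁ ×ˢ C₂)
    (hmin : ∀ k : ℕ, IsMinOn (fun p : X × X => f p.1 + (k + 1) * ‖p.1 - p.2‖ ^ 2)
      (C₁ ×ˢ C₂) (u k, v k))
    {a : X} (ha : a ∈ C₁ ∩ C₂) :
    ∃ z ∈ C₁ ∩ C₂, f z ≤ f a ∧ ∃ ψ : ℕ → ℕ, StrictMono ψ ∧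
      Tendsto (u ∘ ψ) atTop (𝓝 z) ∧ Tendsto (v ∘ ψ) atTop (𝓝 z) := by
  have hval : ∀ k : ℕ, f (u k) + (k + 1) * ‖u k - v k‖ ^ 2 ≤ f a := fun k => by
    simpa using hmin k (show (a, a) ∈ C₁ ×ˢ C₂ from ha)
  obtain ⟨m, hm⟩ := (hC₁.image hf).isBounded.bddBelow
  have hgap : ∀ k : ℕ, ‖u k - v k‖ ^ 2 ≤ (f a - m) * (1 / ((k : ℝ) + 1)) := fun k => by
    have := hm (mem_image_of_mem f (huv k).1)
    rw [mul_one_div, le_div_iff₀ (by positivity)]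
    nlinarith [hval k]
  have huv0 : Tendsto (fun k => u k - v k) atTop (𝓝 0) := by
    rw [tendsto_zero_iff_norm_tendsto_zero]
    have hsq : Tendsto (fun k => ‖u k - v k‖ ^ 2) atTop (𝓝 0) :=
      squeeze_zero (fun k => by positivity) hgap
        (by simpa using tendsto_one_div_add_atTop_nhds_zero_nat.const_mul (f a - m))
    simpa using hsq.sqrt
  obtain ⟨z, hz₁, ψ, hψ, hu⟩ := hC₁.tendsto_subseq (x := u) fun k => (huv k).1
  have hv : Tendsto (v ∘ ψ) atTop (𝓝 z) := by
    simpa [Function.comp_def] using hu.sub (huv0.comp hψ.tendsto_atTop)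
  have hz₂ : z ∈ C₂ := hC₂.mem_of_tendsto hv (Eventually.of_forall fun k => (huv (ψ k)).2)
  have hfz : f z ≤ f a := le_of_tendsto' (hf.continuousAt.tendsto.comp hu) fun k => by
    simp only [Function.comp_apply]
    nlinarith [hval (ψ k), sq_nonneg ‖u (ψ k) - v (ψ k)‖, show (0 : ℝ) ≤ ψ k from by positivity]
  exact ⟨z, ⟨hz₁, hz₂⟩, hfz, ψ, hψ, hu, hv⟩

theorem exists_isMinOn_penalty_mem {X : Type*} [NormedAddCommGroup X] {C₁ C₂ U : Set X}
    (hC₁ : IsCompact C₁) (hC₂ : IsCompact C₂) (hU : IsOpen U) {f : X → ℝ} (hf : Continuous f)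
    {a : X} (ha : a ∈ C₁ ∩ C₂) (hfU : ∀ z ∈ C₁ ∩ C₂, f z ≤ f a → z ∈ U) :
    ∃ (κ : ℝ) (x₁ x₂ : X), (x₁, x₂) ∈ C₁ ×ˢ C₂ ∧ x₁ ∈ U ∧ x₂ ∈ U ∧
      IsMinOn (fun p : X × X => f p.1 + κ * ‖p.1 - p.2‖ ^ 2) (C₁ ×ˢ C₂) (x₁, x₂) := by
  have hmin : ∀ k : ℕ, ∃ p ∈ C₁ ×ˢ C₂,
      IsMinOn (fun p : X × X => f p.1 + (k + 1) * ‖p.1 - p.2‖ ^ 2) (C₁ ×ˢ C₂) p := fun k =>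
    (hC₁.prod hC₂).exists_isMinOn ⟨(a, a), ha.1, ha.2⟩ (by fun_prop)
  choose p hpC hpmin using hmin
  obtain ⟨z, hz, hfz, ψ, -, hu, hv⟩ := exists_tendsto_of_isMinOn_penalty (u := fun k => (p k).1)
    (v := fun k => (p k).2) hC₁ hC₂.isClosed hf hpC hpmin ha
  have hUz := hU.mem_nhds (hfU z hz hfz)
  obtain ⟨j, hj₁, hj₂⟩ := ((hu.eventually_mem hUz).and (hv.eventually_mem hUz)).exists
  exact ⟨ψ j + 1, (p (ψ j)).1, (p (ψ j)).2, hpC (ψ j), hj₁, hj₂, hpmin (ψ j)⟩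

theorem mem_frechetNormalCone1_of_isLocalMinOn {f : E → ℝ} {f' : E →L[ℝ] ℝ} {Ω : Set E}
    {x ζ : E} (hx : x ∈ Ω) (hmin : IsLocalMinOn f Ω x) (hf : HasFDerivWithinAt f f' Ω x)
    (hζ : ∀ h, f' h = -⟪ζ, h⟫) : ζ ∈ frechetNormalCone1 Ω x := by
  refine ⟨hx, fun ε hε => ?_⟩
  filter_upwards [hf.isLittleO.def hε, hmin] with q hq hqmin
  rw [hζ, Real.norm_eq_abs] at hq
  linarith [le_abs_self (f q - f x - -⟪ζ, q - x⟫)]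

theorem mem_frechetNormalCone1_of_isMinOn_penalty {Ω₁ Ω₂ C₁ C₂ : Set E} {x₁ x₂ ξ c : E} {M κ : ℝ}
    (hC₁Ω : C₁ ⊆ Ω₁) (hC₂Ω : C₂ ⊆ Ω₂) (hC₁ : C₁ ∈ 𝓝[Ω₁] x₁) (hC₂ : C₂ ∈ 𝓝[Ω₂] x₂)
    (hx : (x₁, x₂) ∈ C₁ ×ˢ C₂)
    (hmin : IsMinOn (fun p : E × E => -⟪ξ, p.1 - c⟫ + M * ‖p.1 - c‖ ^ 2 + κ * ‖p.1 - p.2‖ ^ 2)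
      (C₁ ×ˢ C₂) (x₁, x₂)) :
    ξ - (2 * M) • (x₁ - c) - (2 * κ) • (x₁ - x₂) ∈ frechetNormalCone1 Ω₁ x₁ ∧
      (2 * κ) • (x₁ - x₂) ∈ frechetNormalCone1 Ω₂ x₂ := by
  constructor
  · refine mem_frechetNormalCone1_of_isLocalMinOn (hC₁Ω hx.1)
      (f := fun w => -⟪ξ, w - c⟫ + M * ‖w - c‖ ^ 2 + κ * ‖w - x₂‖ ^ 2)
      (mem_of_superset hC₁ fun w hw => hmin (mk_mem_prod hw hx.2))
      ((((innerSL ℝ ξ).hasFDerivAt.comp x₁ ((hasFDerivAt_id x₁).sub_const c)).neg.add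
        ((((hasFDerivAt_id x₁).sub_const c).norm_sq).const_mul M)).add
        ((((hasFDerivAt_id x₁).sub_const x₂).norm_sq).const_mul κ)).hasFDerivWithinAt
      fun h => ?_
    simp only [ContinuousLinearMap.comp_id, id_eq, map_sub, add_apply, neg_apply, coe_innerSL_apply,
      smul_apply, sub_apply, nsmul_eq_mul, Nat.cast_ofNat, smul_eq_mul, inner_sub_left,
      inner_smul_left, Real.ringHom_apply, neg_sub]
    ring
  · refine mem_frechetNormalCone1_of_isLocalMinOn (hC₂Ω hx.2)
      (f := fun w => -⟪ξ, x₁ - c⟫ + M * ‖x₁ - c‖ ^ 2 + κ * ‖x₁ - w‖ ^ 2)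
      (mem_of_superset hC₂ fun w hw => hmin (mk_mem_prod hx.1 hw))
      (((((hasFDerivAt_id x₂).const_sub x₁).norm_sq).const_mul κ).const_add _).hasFDerivWithinAt
      fun h => ?_
    simp only [id_eq, map_sub, ContinuousLinearMap.comp_neg, ContinuousLinearMap.comp_id, neg_sub,
      smul_apply, sub_apply, coe_innerSL_apply, nsmul_eq_mul, Nat.cast_ofNat, smul_eq_mul,
      inner_smul_left, Real.ringHom_apply, real_inner_comm, inner_sub_right]
    ring

def LocallyClosedAt {X : Type*} [TopologicalSpace X] (Ω : Set X) (x : X) : Prop :=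
  ∃ U ∈ 𝓝 x, IsClosed (Ω ∩ U)

theorem LocallyClosedAt.preimage {X Y : Type*} [TopologicalSpace X] [TopologicalSpace Y]
    {f : X → Y} {Ω : Set Y} {x : X} (h : LocallyClosedAt Ω (f x)) (hf : Continuous f) :
    LocallyClosedAt (f ⁻¹' Ω) x :=
  let ⟨U, hU, hc⟩ := h
  ⟨f ⁻¹' U, hf.continuousAt.preimage_mem_nhds hU, hc.preimage hf⟩

theorem LocallyClosedAt.eventually_isCompact_inter_closedBall {X : Type*} [PseudoMetricSpace X]
    [ProperSpace X] {Ω : Set X} {x : X} (h : LocallyClosedAt Ω x) :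
    ∀ᶠ δ in 𝓝 (0 : ℝ), IsCompact (Ω ∩ closedBall x δ) := by
  obtain ⟨U, hU, hc⟩ := h
  filter_upwards [eventually_closedBall_subset hU] with δ hδ
  rw [← inter_eq_right.2 hδ, ← inter_assoc]
  exact (isCompact_closedBall x δ).inter_left hc

theorem exists_frechetNormalCone1_near_of_mem_inter [FiniteDimensional ℝ E] {Ω₁ Ω₂ : Set E}
    {x₀ ξ : E} (h₁ : LocallyClosedAt Ω₁ x₀) (h₂ : LocallyClosedAt Ω₂ x₀)
    (hξ : ξ ∈ frechetNormalCone1 (Ω₁ ∩ Ω₂) x₀) {ε : ℝ} (hε : 0 < ε) :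
    ∃ x₁ x₂ ξ₁ ξ₂ : E, ‖x₁ - x₀‖ ≤ ε ∧ ‖x₂ - x₀‖ ≤ ε ∧ ξ₁ ∈ frechetNormalCone1 Ω₁ x₁ ∧
      ξ₂ ∈ frechetNormalCone1 Ω₂ x₂ ∧ ‖ξ - ξ₁ - ξ₂‖ ≤ ε := by
  have hW := eventually_nhdsWithin_iff.1 (hξ.2 (ε / 4) (by positivity))
  obtain ⟨δ, ⟨⟨hδW, hC₁⟩, hC₂⟩, hδ, hδε⟩ := ((((eventually_closedBall_subset hW).and
    h₁.eventually_isCompact_inter_closedBall).and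
    h₂.eventually_isCompact_inter_closedBall).filter_mono nhdsWithin_le_nhds).and
    (Ioc_mem_nhdsGT hε) |>.exists
  -- With `M = ε / δ`, the Fréchet inequality with tolerance `ε / 4` confines the sublevel set
  -- `{f ≤ f x₀}` of `C₁ ∩ C₂` to `ball x₀ (δ / 3)`, and the error `2 M ‖x₁ - x₀‖` stays below `ε`.
  set M := ε / δ
  have hMδ : M * δ = ε := div_mul_cancel₀ ε hδ.ne'
  set C₁ := Ω₁ ∩ closedBall x₀ δ
  set C₂ := Ω₂ ∩ closedBall x₀ δ
  have hx₀ : x₀ ∈ C₁ ∩ C₂ :=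
    ⟨⟨hξ.1.1, mem_closedBall_self hδ.le⟩, ⟨hξ.1.2, mem_closedBall_self hδ.le⟩⟩
  set f : E → ℝ := fun u => -⟪ξ, u - x₀⟫ + M * ‖u - x₀‖ ^ 2
  have hsub : ∀ z ∈ C₁ ∩ C₂, f z ≤ f x₀ → z ∈ ball x₀ (δ / 3) := by
    intro z hz hfz
    have hfre : ⟪ξ, z - x₀⟫ ≤ ε / 4 * ‖z - x₀‖ := hδW hz.1.2 ⟨hz.1.1, hz.2.1⟩
    rw [mem_ball_iff_norm]
    by_contra! hfar
    have hgrow : M * ‖z - x₀‖ * (δ / 3) ≤ M * ‖z - x₀‖ * ‖z - x₀‖ :=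
      mul_le_mul_of_nonneg_left hfar (by positivity)
    simp only [f, sub_self, inner_zero_right, norm_zero] at hfz
    nlinarith [mul_pos hε (hδ.trans_le (by linarith : δ ≤ 3 * ‖z - x₀‖))]
  obtain ⟨κ, x₁, x₂, hx, hx₁, hx₂, hmin⟩ :=
    exists_isMinOn_penalty_mem hC₁ hC₂ isOpen_ball (by fun_prop) hx₀ hsub
  have hnear : ∀ {Ω : Set E} {x : E}, x ∈ ball x₀ (δ / 3) → Ω ∩ closedBall x₀ δ ∈ 𝓝[Ω] x :=
    fun hx => inter_mem_nhdsWithin _ (closedBall_mem_nhds_of_mem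
      (ball_subset_ball (by linarith) hx))
  obtain ⟨hN₁, hN₂⟩ := mem_frechetNormalCone1_of_isMinOn_penalty inter_subset_left
    inter_subset_left (hnear hx₁) (hnear hx₂) hx hmin
  rw [mem_ball_iff_norm] at hx₁ hx₂
  refine ⟨x₁, x₂, _, _, by linarith, by linarith, hN₁, hN₂, ?_⟩
  have herr : ξ - (ξ - (2 * M) • (x₁ - x₀) - (2 * κ) • (x₁ - x₂)) - (2 * κ) • (x₁ - x₂) =
      (2 * M) • (x₁ - x₀) := by abel
  rw [herr, norm_smul, Real.norm_of_nonneg (by positivity)]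
  nlinarith [norm_nonneg (x₁ - x₀)]

theorem norm_le_norm_toLp {α β : Type*} [SeminormedAddCommGroup α] [SeminormedAddCommGroup β]
    (x : α × β) : ‖x‖ ≤ ‖WithLp.toLp 2 x‖ :=
  norm_prod_le_iff.2 ⟨by simpa using WithLp.norm_fst_le α (WithLp.toLp 2 x),
    by simpa using WithLp.norm_snd_le α (WithLp.toLp 2 x)⟩

theorem norm_toLp_le {α β : Type*} [SeminormedAddCommGroup α] [SeminormedAddCommGroup β]
    (x : α × β) : ‖WithLp.toLp 2 x‖ ≤ 2 * ‖x‖ := by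
  have h := WithLp.prod_norm_sq_eq_of_L2 (WithLp.toLp 2 x)
  simp only [WithLp.toLp_fst, WithLp.toLp_snd] at h
  nlinarith [norm_fst_le x, norm_snd_le x, norm_nonneg x.1, norm_nonneg x.2,
    norm_nonneg (WithLp.toLp 2 x), norm_nonneg x]

/-- `frechetNormalCone2` pairs vectors through the inner product of `WithLp 2 (E × F)` but measures
distances in the sup norm of `E × F`; the two norms are equivalent, so it is the regular normal
cone of `WithLp 2 (E × F)`. -/
theorem mem_frechetNormalCone2_iff {Ω : Set (E × F)} {p ξ : E × F} :
    ξ ∈ frechetNormalCone2 Ω p ↔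
      WithLp.toLp 2 ξ ∈ frechetNormalCone1 (WithLp.ofLp ⁻¹' Ω) (WithLp.toLp 2 p) := by
  have hnhds : 𝓝[WithLp.ofLp ⁻¹' Ω] (WithLp.toLp 2 p) = map (WithLp.toLp 2) (𝓝[Ω] p) := by
    have := (WithLp.homeomorphProd 2 E F).symm.isEmbedding.map_nhdsWithin_eq Ω p
    rw [Homeomorph.image_eq_preimage_symm] at this
    exact this.symm
  simp only [frechetNormalCone1, frechetNormalCone2, mem_preimage,
    WithLp.ofLp_toLp, hnhds, eventually_map, ← WithLp.toLp_sub, WithLp.prod_inner_apply,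
    Prod.fst_sub, Prod.snd_sub]
  refine and_congr_right fun _ => ⟨fun h ε hε => ?_, fun h ε hε => ?_⟩
  · filter_upwards [h ε hε] with q hq
    nlinarith [norm_le_norm_toLp (q - p)]
  · filter_upwards [h (ε / 2) (by positivity)] with q hq
    nlinarith [norm_toLp_le (q - p)]

theorem exists_frechetNormalCone2_near_of_mem_inter [FiniteDimensional ℝ E] [FiniteDimensional ℝ F]
    {Ω₁ Ω₂ : Set (E × F)} {p ξ : E × F} (h₁ : LocallyClosedAt Ω₁ p) (h₂ : LocallyClosedAt Ω₂ p)
    (hξ : ξ ∈ frechetNormalCone2 (Ω₁ ∩ Ω₂) p) {ε : ℝ} (hε : 0 < ε) :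
    ∃ x₁ x₂ ξ₁ ξ₂ : E × F, ‖x₁ - p‖ ≤ ε ∧ ‖x₂ - p‖ ≤ ε ∧ ξ₁ ∈ frechetNormalCone2 Ω₁ x₁ ∧
      ξ₂ ∈ frechetNormalCone2 Ω₂ x₂ ∧ ‖ξ - ξ₁ - ξ₂‖ ≤ ε := by
  have hc := WithLp.prod_continuous_ofLp 2 E F
  obtain ⟨x₁, x₂, ξ₁, ξ₂, hx₁, hx₂, hξ₁, hξ₂, hsum⟩ := exists_frechetNormalCone1_near_of_mem_inter
    (LocallyClosedAt.preimage (x := WithLp.toLp 2 p) h₁ hc) (h₂.preimage hc)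
    (mem_frechetNormalCone2_iff.1 hξ) hε
  have hofLp : ∀ y : WithLp 2 (E × F), ‖WithLp.ofLp y‖ ≤ ‖y‖ := fun y => by
    simpa using norm_le_norm_toLp (WithLp.ofLp y)
  refine ⟨x₁.ofLp, x₂.ofLp, ξ₁.ofLp, ξ₂.ofLp, ?_, ?_, mem_frechetNormalCone2_iff.2 (by simpa),
    mem_frechetNormalCone2_iff.2 (by simpa), ?_⟩
  · simpa using (hofLp _).trans hx₁
  · simpa using (hofLp _).trans hx₂
  · simpa using (hofLp _).trans hsum

theorem smul_mem_frechetNormalCone2 {Ω : Set (E × F)} {p ξ : E × F} {t : ℝ} (ht : 0 ≤ t)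
    (hξ : ξ ∈ frechetNormalCone2 Ω p) : t • ξ ∈ frechetNormalCone2 Ω p := by
  refine ⟨hξ.1, fun ε hε => ?_⟩
  filter_upwards [hξ.2 (ε / (t + 1)) (by positivity)] with q hq
  have hlt : t * (ε / (t + 1)) ≤ ε := by
    rw [mul_div_assoc', div_le_iff₀ (by positivity)]
    nlinarith
  simp only [Prod.smul_fst, Prod.smul_snd, real_inner_smul_left, ← mul_add]
  calc t * (⟪ξ.1, q.1 - p.1⟫ + ⟪ξ.2, q.2 - p.2⟫) ≤ t * (ε / (t + 1) * ‖q - p‖) :=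
        mul_le_mul_of_nonneg_left hq ht
    _ ≤ ε * ‖q - p‖ := by
        rw [← mul_assoc]; exact mul_le_mul_of_nonneg_right hlt (norm_nonneg _)

def TendstoAtInfty {X Y : Type*} [Norm X] [TopologicalSpace Y] (x : ℕ → X × Y) (ybar : Y) :
    Prop :=
  Tendsto (fun k => ‖(x k).1‖) atTop atTop ∧ Tendsto (fun k => (x k).2) atTop (𝓝 ybar)

section TendstoAtInfty

variable {X Y : Type*} [NormedAddCommGroup X] [NormedAddCommGroup Y] {x x' : ℕ → X × Y} {ybar : Y}

theorem TendstoAtInfty.comp (h : TendstoAtInfty x ybar) {ψ : ℕ → ℕ}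
    (hψ : Tendsto ψ atTop atTop) : TendstoAtInfty (x ∘ ψ) ybar :=
  ⟨h.1.comp hψ, h.2.comp hψ⟩

theorem TendstoAtInfty.of_tendsto_sub (h : TendstoAtInfty x ybar)
    (hx' : Tendsto (fun k => x' k - x k) atTop (𝓝 0)) : TendstoAtInfty x' ybar := by
  have hd := (continuous_norm.tendsto 0).comp ((continuous_fst.tendsto 0).comp hx')
  simp only [Function.comp_def, norm_zero] at hd
  refine ⟨tendsto_atTop_mono (fun k => ?_) (h.1.atTop_add hd.neg), ?_⟩
  · have := norm_sub_norm_le (x k).1 (x' k).1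
    rw [norm_sub_rev] at this
    simp only [Prod.fst_sub]
    linarith
  · simpa using h.2.add ((continuous_snd.tendsto 0).comp hx')

theorem LocallyClosedAtInfty.eventually_locallyClosedAt {Ω : Set (X × Y)}
    (h : LocallyClosedAtInfty Ω ybar) (hx : TendstoAtInfty x ybar) :
    ∀ᶠ k in atTop, LocallyClosedAt Ω (x k) := by
  obtain ⟨R, -, V, hV, -, hc⟩ := h
  filter_upwards [hx.1.eventually_gt_atTop R, hx.2.eventually_mem (interior_mem_nhds.2 hV)]
    with k hR hV
  have hopen : IsOpen {q : X × Y | R < ‖q.1‖ ∧ q.2 ∈ interior V} :=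
    (isOpen_lt continuous_const continuous_fst.norm).inter (isOpen_interior.preimage continuous_snd)
  exact ⟨{q | R ≤ ‖q.1‖ ∧ q.2 ∈ V}, mem_of_superset (hopen.mem_nhds ⟨hR, hV⟩)
    fun q hq => ⟨hq.1.le, interior_subset hq.2⟩, hc⟩

theorem LocallyClosedAtInfty.inter {Ω₁ Ω₂ : Set (X × Y)}
    (h₁ : LocallyClosedAtInfty Ω₁ ybar) (h₂ : LocallyClosedAtInfty Ω₂ ybar) :
    LocallyClosedAtInfty (Ω₁ ∩ Ω₂) ybar := by
  obtain ⟨R₁, hR₁, V₁, hV₁, hV₁c, hc₁⟩ := h₁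
  obtain ⟨R₂, -, V₂, hV₂, hV₂c, hc₂⟩ := h₂
  refine ⟨max R₁ R₂, lt_max_of_lt_left hR₁, V₁ ∩ V₂, inter_mem hV₁ hV₂, hV₁c.inter hV₂c, ?_⟩
  have hS : IsClosed {p : X × Y | max R₁ R₂ ≤ ‖p.1‖ ∧ p.2 ∈ V₁ ∩ V₂} :=
    (isClosed_le continuous_const continuous_fst.norm).inter
      ((hV₁c.inter hV₂c).preimage continuous_snd)
  convert (hc₁.inter hc₂).inter hS using 1
  ext p
  simp only [mem_inter_iff, mem_ofPred_eq, max_le_iff]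
  tauto

end TendstoAtInfty

theorem mem_normalConeAtInfty_iff {Ω : Set (E × F)} {ybar : F} {ζ : E × F} :
    ζ ∈ normalConeAtInfty Ω ybar ↔ ∃ x ξ : ℕ → E × F, TendstoAtInfty x ybar ∧
      (∀ k, ξ k ∈ frechetNormalCone2 Ω (x k)) ∧ Tendsto ξ atTop (𝓝 ζ) :=
  ⟨fun ⟨x, ξ, _, h₁, h₂, hξ, hζ⟩ => ⟨x, ξ, ⟨h₁, h₂⟩, hξ, hζ⟩,
    fun ⟨x, ξ, ⟨h₁, h₂⟩, hξ, hζ⟩ => ⟨x, ξ, fun k => (hξ k).1, h₁, h₂, hξ, hζ⟩⟩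

theorem exists_subseq_tendsto_or_tendsto_norm_atTop {X : Type*} [NormedAddCommGroup X]
    [ProperSpace X] (a : ℕ → X) :
    (∃ z, ∃ ψ : ℕ → ℕ, StrictMono ψ ∧ Tendsto (a ∘ ψ) atTop (𝓝 z)) ∨
      Tendsto (fun k => ‖a k‖) atTop atTop := by
  by_cases h : ∃ C, ∃ᶠ k in atTop, a k ∈ closedBall (0 : X) C
  · obtain ⟨C, hC⟩ := h
    obtain ⟨z, -, ψ, hψ, hz⟩ := tendsto_subseq_of_frequently_bounded isBounded_closedBall hC
    exact Or.inl ⟨z, ψ, hψ, hz⟩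
  · simp only [not_exists, not_frequently, mem_closedBall_zero_iff, not_le] at h
    exact Or.inr (tendsto_atTop.2 fun C => (h C).mono fun k hk => hk.le)

section Transversality

variable [FiniteDimensional ℝ E] [FiniteDimensional ℝ F] {Ω₁ Ω₂ : Set (E × F)} {ybar : F}
  {x₁ x₂ ξ₁ ξ₂ : ℕ → E × F} {ξ : E × F}

theorem exists_ne_zero_mem_normalConeAtInfty_of_tendsto_norm (hx₁ : TendstoAtInfty x₁ ybar)
    (hx₂ : TendstoAtInfty x₂ ybar) (hξ₁ : ∀ k, ξ₁ k ∈ frechetNormalCone2 Ω₁ (x₁ k))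
    (hξ₂ : ∀ k, ξ₂ k ∈ frechetNormalCone2 Ω₂ (x₂ k))
    (hsum : Tendsto (fun k => ξ₁ k + ξ₂ k) atTop (𝓝 ξ))
    (hinf : Tendsto (fun k => ‖ξ₁ k‖) atTop atTop) :
    ∃ η ≠ 0, η ∈ normalConeAtInfty Ω₁ ybar ∧ -η ∈ normalConeAtInfty Ω₂ ybar := by
  have hball : ∀ k, ‖ξ₁ k‖⁻¹ • ξ₁ k ∈ closedBall (0 : E × F) 1 := fun k => by
    rw [mem_closedBall_zero_iff, norm_smul, norm_inv, norm_norm]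
    exact inv_mul_le_one_of_le₀ le_rfl (norm_nonneg _)
  obtain ⟨η, -, ψ, hψ, hη⟩ := (isCompact_closedBall (0 : E × F) 1).tendsto_subseq hball
  have hψ' := hψ.tendsto_atTop
  have hη1 : ‖η‖ = 1 := by
    refine tendsto_nhds_unique hη.norm (tendsto_const_nhds.congr' ?_)
    filter_upwards [(hinf.comp hψ').eventually_gt_atTop 0] with k hk
    simp only [Function.comp_apply] at hk ⊢
    rw [norm_smul, norm_inv, norm_norm, inv_mul_cancel₀ hk.ne']
  have hneg : Tendsto (fun k => ‖ξ₁ (ψ k)‖⁻¹ • ξ₂ (ψ k)) atTop (𝓝 (-η)) := by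
    have := ((hinf.inv_tendsto_atTop.smul hsum).comp hψ').sub hη
    simpa [smul_add] using this
  refine ⟨η, norm_ne_zero_iff.1 (by simp [hη1]), mem_normalConeAtInfty_iff.2 ⟨x₁ ∘ ψ, _,
    hx₁.comp hψ', fun k => smul_mem_frechetNormalCone2 (by positivity) (hξ₁ (ψ k)), hη⟩,
    mem_normalConeAtInfty_iff.2 ⟨x₂ ∘ ψ, _, hx₂.comp hψ',
    fun k => smul_mem_frechetNormalCone2 (by positivity) (hξ₂ (ψ k)), hneg⟩⟩

theorem mem_add_normalConeAtInfty_of_tendsto_add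
    (htrans : normalConeAtInfty Ω₁ ybar ∩ (-(normalConeAtInfty Ω₂ ybar)) = {0})
    (hx₁ : TendstoAtInfty x₁ ybar) (hx₂ : TendstoAtInfty x₂ ybar)
    (hξ₁ : ∀ k, ξ₁ k ∈ frechetNormalCone2 Ω₁ (x₁ k))
    (hξ₂ : ∀ k, ξ₂ k ∈ frechetNormalCone2 Ω₂ (x₂ k))
    (hsum : Tendsto (fun k => ξ₁ k + ξ₂ k) atTop (𝓝 ξ)) :
    ξ ∈ normalConeAtInfty Ω₁ ybar + normalConeAtInfty Ω₂ ybar := by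
  rcases exists_subseq_tendsto_or_tendsto_norm_atTop ξ₁ with ⟨ζ, ψ, hψ, hζ⟩ | hinf
  · have hψ' := hψ.tendsto_atTop
    refine ⟨ζ, mem_normalConeAtInfty_iff.2 ⟨_, _, hx₁.comp hψ', fun k => hξ₁ (ψ k), hζ⟩,
      ξ - ζ, mem_normalConeAtInfty_iff.2 ⟨_, _, hx₂.comp hψ', fun k => hξ₂ (ψ k), ?_⟩,
      add_sub_cancel ζ ξ⟩
    simpa using (hsum.comp hψ').sub hζ
  · obtain ⟨η, hη0, hη₁, hη₂⟩ :=
      exists_ne_zero_mem_normalConeAtInfty_of_tendsto_norm hx₁ hx₂ hξ₁ hξ₂ hsum hinf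
    exact absurd (htrans.subset ⟨hη₁, hη₂⟩) hη0

theorem exists_tendsto_add_of_mem_normalConeAtInfty_inter (h₁ : LocallyClosedAtInfty Ω₁ ybar)
    (h₂ : LocallyClosedAtInfty Ω₂ ybar) (hξ : ξ ∈ normalConeAtInfty (Ω₁ ∩ Ω₂) ybar) :
    ∃ x₁ x₂ ξ₁ ξ₂ : ℕ → E × F, TendstoAtInfty x₁ ybar ∧ TendstoAtInfty x₂ ybar ∧
      (∀ k, ξ₁ k ∈ frechetNormalCone2 Ω₁ (x₁ k)) ∧ (∀ k, ξ₂ k ∈ frechetNormalCone2 Ω₂ (x₂ k)) ∧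
      Tendsto (fun k => ξ₁ k + ξ₂ k) atTop (𝓝 ξ) := by
  obtain ⟨p, ζ, hp, hζ, hlim⟩ := mem_normalConeAtInfty_iff.1 hξ
  obtain ⟨N, hN⟩ := eventually_atTop.1
    ((h₁.eventually_locallyClosedAt hp).and (h₂.eventually_locallyClosedAt hp))
  have hnear : ∀ k : ℕ, ∃ y₁ y₂ η₁ η₂ : E × F, ‖y₁ - p (k + N)‖ ≤ 1 / (k + 1) ∧
      ‖y₂ - p (k + N)‖ ≤ 1 / (k + 1) ∧ η₁ ∈ frechetNormalCone2 Ω₁ y₁ ∧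
      η₂ ∈ frechetNormalCone2 Ω₂ y₂ ∧ ‖ζ (k + N) - η₁ - η₂‖ ≤ 1 / (k + 1) := fun k =>
    exists_frechetNormalCone2_near_of_mem_inter (hN _ le_add_self).1 (hN _ le_add_self).2
      (hζ (k + N)) Nat.one_div_pos_of_nat
  choose y₁ y₂ η₁ η₂ hy₁ hy₂ hη₁ hη₂ herr using hnear
  have hshift := tendsto_add_atTop_nat N
  have hp' := hp.comp hshift
  have hsmall : ∀ {a b : ℕ → E × F}, (∀ k : ℕ, ‖a k - b k‖ ≤ 1 / (k + 1)) →
      Tendsto (fun k => a k - b k) atTop (𝓝 0) := fun h =>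
    squeeze_zero_norm h tendsto_one_div_add_atTop_nhds_zero_nat
  refine ⟨y₁, y₂, η₁, η₂, hp'.of_tendsto_sub (hsmall hy₁), hp'.of_tendsto_sub (hsmall hy₂),
    hη₁, hη₂, ?_⟩
  simpa [sub_sub] using (hlim.comp hshift).sub (hsmall herr)

end Transversality

/-- Intersection rule for normal cones at infinity. -/
theorem stmt1 {n m : ℕ} (Ω₁ Ω₂ : Set (Eucl n × Eucl m)) (ybar : Eucl m)
    (h₁ : LocallyClosedAtInfty Ω₁ ybar) (h₂ : LocallyClosedAtInfty Ω₂ ybar)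
    (htrans : normalConeAtInfty Ω₁ ybar ∩ (-(normalConeAtInfty Ω₂ ybar)) = {0}) :
    LocallyClosedAtInfty (Ω₁ ∩ Ω₂) ybar ∧
      normalConeAtInfty (Ω₁ ∩ Ω₂) ybar ⊆
        normalConeAtInfty Ω₁ ybar + normalConeAtInfty Ω₂ ybar := by
  refine ⟨h₁.inter h₂, fun ξ hξ => ?_⟩
  obtain ⟨x₁, x₂, ξ₁, ξ₂, hx₁, hx₂, hξ₁, hξ₂, hsum⟩ :=
    exists_tendsto_add_of_mem_normalConeAtInfty_inter h₁ h₂ hξ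
  exact mem_add_normalConeAtInfty_of_tendsto_add htrans hx₁ hx₂ hξ₁ hξ₂ hsum
end
end

section
/- Let f : ℝ^n → ℝ ∪ {+∞} be a lower semicontinuous function and ȳ ∈ J(f). Regarding f as the set-valued mapping x ⇉ {f(x)} for x ∈ dom f (so gph f = {(x, f(x)) : x ∈ dom f}), one has ∂f(∞, ȳ) = D*f(∞, ȳ)(1), where ∂f(∞, ȳ) is the limiting subdifferential of f at (∞, ȳ) and D*f(∞, ȳ) is the coderivative at infinity of this set-valued mapping. -/
open Filter Topology Set Metric Pointwise
open scoped RealInnerProductSpace ENNReal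

noncomputable section

variable {E F G : Type*}
  [NormedAddCommGroup E] [InnerProductSpace ℝ E]
  [NormedAddCommGroup F] [InnerProductSpace ℝ F]
  [NormedAddCommGroup G] [InnerProductSpace ℝ G]

/-! A regular normal `ξ` to the epigraph with `ξ.2 < 0` can only sit at a point of the graph,
since below the graph the epigraph contains a downward vertical segment; there `ξ` is also
normal to the smaller set `gph f`. Conversely, if `f` is lower semicontinuous, every point `q`
of the epigraph near a graph point lies above the nearby graph point `(q.1, f q.1)`, and the
vertical gap only lowers the pairing with `ξ`. Since `ξ.2 < 0` on a neighbourhood of `(u, -1)`,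
the two normal cones at infinity agree there. -/

theorem frechetNormalCone2_anti {Ω₁ Ω₂ : Set (E × F)} (h : Ω₁ ⊆ Ω₂) {p : E × F} (hp : p ∈ Ω₁) :
    frechetNormalCone2 Ω₂ p ⊆ frechetNormalCone2 Ω₁ p := fun _ hξ =>
  ⟨hp, fun ε hε => (hξ.2 ε hε).filter_mono (nhdsWithin_mono p h)⟩

theorem inner_nonpos_of_mem_frechetNormalCone2 {Ω : Set (E × F)} {p ξ v : E × F}
    (hξ : ξ ∈ frechetNormalCone2 Ω p) (hv : ∀ᶠ t in 𝓝[>] (0 : ℝ), p + t • v ∈ Ω) :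
    ⟪ξ.1, v.1⟫ + ⟪ξ.2, v.2⟫ ≤ 0 := by
  have hseg : Tendsto (fun t : ℝ => p + t • v) (𝓝[>] 0) (𝓝[Ω] p) := by
    refine tendsto_nhdsWithin_iff.2 ⟨?_, hv⟩
    have : Tendsto (fun t : ℝ => p + t • v) (𝓝 0) (𝓝 (p + (0 : ℝ) • v)) :=
      (continuous_const.add (continuous_id.smul continuous_const)).tendsto 0
    simpa using this.mono_left nhdsWithin_le_nhds
  refine le_of_forall_pos_le_add fun ε hε => ?_
  have hε' : 0 < ε / (‖v‖ + 1) := by positivity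
  obtain ⟨t, ht, ht0⟩ := ((hseg.eventually (hξ.2 _ hε')).and self_mem_nhdsWithin).exists
  simp only [Prod.fst_add, Prod.snd_add, add_sub_cancel_left, Prod.smul_fst, Prod.smul_snd,
    inner_smul_right, norm_smul, Real.norm_of_nonneg ht0.le] at ht
  have hbound : ⟪ξ.1, v.1⟫ + ⟪ξ.2, v.2⟫ ≤ ε / (‖v‖ + 1) * ‖v‖ := by nlinarith
  have hsmall : ε / (‖v‖ + 1) * ‖v‖ ≤ ε := by
    rw [div_mul_eq_mul_div, div_le_iff₀ (by positivity)]
    nlinarith [norm_nonneg v]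
  linarith

theorem mem_gphFun_of_mem_frechetNormalCone2_epiSet {f : E → EReal} {p ξ : E × ℝ}
    (hξ : ξ ∈ frechetNormalCone2 (epiSet f) p) (hneg : ξ.2 < 0) : p ∈ gphFun f := by
  by_contra hp
  obtain ⟨s, hfs, hsr⟩ := EReal.lt_iff_exists_real_btwn.1 (lt_of_le_of_ne hξ.1 hp)
  have hdown : ∀ᶠ t in 𝓝[>] (0 : ℝ), p + t • ((0, -1) : E × ℝ) ∈ epiSet f := by
    filter_upwards [Ioo_mem_nhdsGT (sub_pos.2 (EReal.coe_lt_coe_iff.1 hsr))] with t ht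
    simp only [epiSet, Set.mem_ofPred_eq, Prod.fst_add, Prod.snd_add, Prod.smul_fst, Prod.smul_snd,
      smul_zero, add_zero, smul_eq_mul]
    exact hfs.le.trans (EReal.coe_le_coe_iff.2 (by linarith [ht.2]))
  have := inner_nonpos_of_mem_frechetNormalCone2 hξ hdown
  simp only [inner_zero_right, Real.inner_apply, zero_add] at this
  linarith

theorem tendsto_nhdsWithin_epiSet_of_lowerSemicontinuous {X : Type*} [TopologicalSpace X]
    {f : X → EReal} (hlsc : LowerSemicontinuous f) {p : X × ℝ} (hp : p ∈ gphFun f) :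
    Tendsto (fun q : X × ℝ => f q.1) (𝓝[epiSet f] p) (𝓝 (p.2 : EReal)) := by
  have hfst : Tendsto Prod.fst (𝓝[epiSet f] p) (𝓝 p.1) :=
    continuous_fst.continuousAt.mono_left nhdsWithin_le_nhds
  have hsnd : Tendsto (fun q : X × ℝ => (q.2 : EReal)) (𝓝[epiSet f] p) (𝓝 (p.2 : EReal)) :=
    (continuous_coe_real_ereal.comp continuous_snd).continuousAt.mono_left nhdsWithin_le_nhds
  refine tendsto_order.2
    ⟨fun a ha => hfst.eventually (hlsc p.1 a (ha.trans_eq (Eq.symm hp))), fun a ha => ?_⟩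
  filter_upwards [hsnd.eventually (gt_mem_nhds ha), self_mem_nhdsWithin] with q hq hqepi
  exact lt_of_le_of_lt hqepi hq

theorem mem_frechetNormalCone2_epiSet_of_gphFun {f : E → EReal} (hlsc : LowerSemicontinuous f)
    {p ξ : E × ℝ} (hξ : ξ ∈ frechetNormalCone2 (gphFun f) p) (hneg : ξ.2 < 0) :
    ξ ∈ frechetNormalCone2 (epiSet f) p := by
  refine ⟨hξ.1.le, fun ε hε => ?_⟩
  have hf := tendsto_nhdsWithin_epiSet_of_lowerSemicontinuous hlsc hξ.1
  have hreal : ∀ᶠ q in 𝓝[epiSet f] p, f q.1 = ((f q.1).toReal : EReal) :=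
    ((hf.eventually_ne (EReal.coe_ne_top _)).and (hf.eventually_ne (EReal.coe_ne_bot _))).mono
      fun q hq => (EReal.coe_toReal hq.1 hq.2).symm
  have hproj :
      Tendsto (fun q : E × ℝ => (q.1, (f q.1).toReal)) (𝓝[epiSet f] p) (𝓝[gphFun f] p) := by
    refine tendsto_nhdsWithin_iff.2 ⟨?_, hreal⟩
    have hfst : Tendsto Prod.fst (𝓝[epiSet f] p) (𝓝 p.1) :=
      continuous_fst.continuousAt.mono_left nhdsWithin_le_nhds
    simpa using hfst.prodMk_nhds ((EReal.tendsto_toReal (EReal.coe_ne_top _)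
      (EReal.coe_ne_bot _)).comp hf)
  set ε' := min ε (-ξ.2)
  have hε' : 0 < ε' := lt_min hε (neg_pos.2 hneg)
  filter_upwards [hproj.eventually (hξ.2 ε' hε'), hreal, self_mem_nhdsWithin]
    with q hgraph hq hqepi
  set t := (f q.1).toReal
  have hgap : t ≤ q.2 := EReal.coe_le_coe_iff.1 (hq ▸ hqepi)
  have hnorm : ‖(q.1, t) - p‖ ≤ ‖q - p‖ + (q.2 - t) := by
    have : (q.1, t) - p = (q - p) - (0, q.2 - t) := by ext <;> simp
    calc ‖(q.1, t) - p‖ ≤ ‖q - p‖ + ‖((0 : E), q.2 - t)‖ := this ▸ norm_sub_le _ _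
      _ = ‖q - p‖ + (q.2 - t) := by simp [Prod.norm_def, hgap]
  simp only [Real.inner_apply] at hgraph ⊢
  nlinarith [mul_le_mul_of_nonneg_left hnorm hε'.le, min_le_left ε (-ξ.2),
    min_le_right ε (-ξ.2), norm_nonneg (q - p)]

theorem normalConeAtInfty_mono_of_eventually {Ω₁ Ω₂ : Set (E × F)} {y : F} {ξ : E × F}
    (h : ∀ᶠ ξ' in 𝓝 ξ, ∀ p, ξ' ∈ frechetNormalCone2 Ω₁ p → ξ' ∈ frechetNormalCone2 Ω₂ p)
    (hξ : ξ ∈ normalConeAtInfty Ω₁ y) : ξ ∈ normalConeAtInfty Ω₂ y := by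
  obtain ⟨pk, ξk, -, hnorm, hy, hnormal, hlim⟩ := hξ
  obtain ⟨N, hN⟩ := eventually_atTop.1 (hlim.eventually h)
  have hnormal' (k : ℕ) : ξk (k + N) ∈ frechetNormalCone2 Ω₂ (pk (k + N)) :=
    hN _ (Nat.le_add_left N k) _ (hnormal _)
  exact ⟨fun k => pk (k + N), fun k => ξk (k + N), fun k => (hnormal' k).1,
    hnorm.comp (tendsto_add_atTop_nat N), hy.comp (tendsto_add_atTop_nat N), hnormal',
    hlim.comp (tendsto_add_atTop_nat N)⟩

theorem stmt8_general {n : ℕ} (f : Eucl n → EReal)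
    (hlsc : LowerSemicontinuous f)
    (ybar : ℝ) :
    limSubdiffAtInfty f ybar =
      {u : Eucl n | (u, -(1 : ℝ)) ∈ normalConeAtInfty (gphFun f) ybar} := by
  ext u
  have hneg : ∀ᶠ ξ in 𝓝 ((u, -1) : Eucl n × ℝ), ξ.2 < 0 :=
    continuous_snd.continuousAt.eventually (gt_mem_nhds (by norm_num))
  constructor
  · exact normalConeAtInfty_mono_of_eventually <| hneg.mono fun ξ hξ p hp =>
      frechetNormalCone2_anti (fun _ hq => hq.le)
        (mem_gphFun_of_mem_frechetNormalCone2_epiSet hp hξ) hp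
  · exact normalConeAtInfty_mono_of_eventually <| hneg.mono fun ξ hξ p hp =>
      mem_frechetNormalCone2_epiSet_of_gphFun hlsc hp hξ

/-- `∂f(∞, ȳ) = D*f(∞, ȳ)(1)`. -/
theorem stmt8 {n : ℕ} (f : Eucl n → EReal)
    (hlsc : LowerSemicontinuous f) (hbot : ∀ x, f x ≠ ⊥)
    (ybar : ℝ) (hJ : ybar ∈ jelonekFun f) :
    limSubdiffAtInfty f ybar =
      {u : Eucl n | (u, -(1 : ℝ)) ∈ normalConeAtInfty (gphFun f) ybar} :=
  stmt8_general f hlsc ybar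
end
end

section
/- Let F : ℝ^n ⇉ ℝ^m be a set-valued mapping with closed graph and ȳ ∈ J(F). If ker D*F(∞, ȳ) = {0}, then F is linearly open at infinity around (∞, ȳ): there exist constants R > 0, μ > 0, ε > 0 and a neighborhood V of ȳ in ℝ^m such that (F(x) + μr𝔹) ∩ V ⊆ F(x + r𝔹) for every x ∈ ℝ^n with ‖x‖ > R and every r ∈ (0, ε). -/
open Filter Topology Set Metric Pointwise
open scoped RealInnerProductSpace ENNReal

noncomputable section

variable {E F G : Type*}
  [NormedAddCommGroup E] [InnerProductSpace ℝ E]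
  [NormedAddCommGroup F] [InnerProductSpace ℝ F]
  [NormedAddCommGroup G] [InnerProductSpace ℝ G]

/-!
If linear openness fails, then arbitrarily far out there are `x`, a small `r` and a point `y`
within `μ r` of `S x` but outside `S (closedBall x r)`. A minimizer `p` of
`‖q.2 - y‖ + 2 μ ‖q.1 - x‖` over the graph has `p.2 ≠ y`, and the graph lies, up to an error of
order `μ`, on one side of the hyperplane through `p` normal to `(0, p.2 - y)`. Projecting
`p - t (0, v)`, `v` the unit vector along `p.2 - y`, back onto the closed graph turns this
one-sided estimate into a proximal, hence Fréchet, normal `ξ` with `ξ.1 ≈ 0` and `ξ.2 ≈ -v`.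
Letting `μ → 0`, a limit of the `v`s is a unit vector in the kernel of the coderivative at
infinity.
-/

theorem exists_isMinOn_of_isBounded_sublevel {X : Type*} [PseudoMetricSpace X] [ProperSpace X]
    {s : Set X} (hs : IsClosed s) {f : X → ℝ} (hf : Continuous f) {x₀ : X} (h₀ : x₀ ∈ s)
    (hb : Bornology.IsBounded {x | f x ≤ f x₀}) : ∃ x ∈ s, IsMinOn f s x := by
  refine hf.continuousOn.exists_isMinOn' hs h₀ (Eventually.filter_mono inf_le_left ?_)
  filter_upwards [hb.isCompact_closure.compl_mem_cocompact] with x hx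
  by_contra h
  exact hx (subset_closure (not_le.1 h).le)

theorem mem_frechetNormalCone2_of_proximal {Ω : Set (E × F)} {p ξ : E × F} (hp : p ∈ Ω) (c : ℝ)
    (h : ∀ q ∈ Ω, ⟪ξ.1, q.1 - p.1⟫ + ⟪ξ.2, q.2 - p.2⟫ ≤ c * ‖q - p‖ ^ 2) :
    ξ ∈ frechetNormalCone2 Ω p := by
  refine ⟨hp, fun ε hε => ?_⟩
  have hclose : ∀ᶠ q in 𝓝[Ω] p, |c| * ‖q - p‖ < ε :=
    nhdsWithin_le_nhds <| (((continuous_id.sub continuous_const).norm.const_mul |c|).tendsto' p 0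
      (by simp)).eventually (gt_mem_nhds hε)
  filter_upwards [hclose, self_mem_nhdsWithin] with q hq hqΩ
  calc _ ≤ c * ‖q - p‖ ^ 2 := h q hqΩ
    _ ≤ (|c| * ‖q - p‖) * ‖q - p‖ := by rw [mul_assoc, ← sq]; gcongr; exact le_abs_self c
    _ ≤ ε * ‖q - p‖ := by gcongr

theorem inner_sub_add_inner_sub_le_of_isMinOn {Ω : Set (E × F)} {a : E} {b : F} {π q : E × F}
    (hmin : IsMinOn (fun q : E × F => ‖q.1 - a‖ ^ 2 + ‖q.2 - b‖ ^ 2) Ω π) (hq : q ∈ Ω) :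
    ⟪a - π.1, q.1 - π.1⟫ + ⟪b - π.2, q.2 - π.2⟫ ≤ ‖q - π‖ ^ 2 := by
  have hle : ‖a - π.1‖ ^ 2 + ‖b - π.2‖ ^ 2 ≤ ‖q.1 - a‖ ^ 2 + ‖q.2 - b‖ ^ 2 := by
    simpa only [mem_ofPred_eq, norm_sub_rev π.1, norm_sub_rev π.2] using hmin hq
  have h₁ : ‖q.1 - a‖ ^ 2 = ‖q.1 - π.1‖ ^ 2 - 2 * ⟪a - π.1, q.1 - π.1⟫ + ‖a - π.1‖ ^ 2 := by
    rw [← sub_sub_sub_cancel_right q.1 a π.1, norm_sub_sq_real, real_inner_comm]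
  have h₂ : ‖q.2 - b‖ ^ 2 = ‖q.2 - π.2‖ ^ 2 - 2 * ⟪b - π.2, q.2 - π.2⟫ + ‖b - π.2‖ ^ 2 := by
    rw [← sub_sub_sub_cancel_right q.2 b π.2, norm_sub_sq_real, real_inner_comm]
  have hfst := pow_le_pow_left₀ (norm_nonneg _) (norm_fst_le (q - π)) 2
  have hsnd := pow_le_pow_left₀ (norm_nonneg _) (norm_snd_le (q - π)) 2
  simp only [Prod.fst_sub, Prod.snd_sub] at hfst hsnd
  linarith

theorem neg_inner_smul_inv_norm_sub_le {a b : F} (ha : a ≠ 0) {c : ℝ} (hc : 0 ≤ c)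
    (h : ‖a‖ - ‖b‖ ≤ c) : ⟪-(‖a‖⁻¹ • a), b - a⟫ ≤ c + (2 * ‖a‖)⁻¹ * ‖b - a‖ ^ 2 := by
  have hpos : 0 < ‖a‖ := norm_pos_iff.2 ha
  have hsq : ‖a‖ ^ 2 - ‖b‖ ^ 2 ≤ 2 * ‖a‖ * c := by
    rcases le_total ‖b‖ ‖a‖ with hba | hab <;> nlinarith [norm_nonneg b]
  calc ⟪-(‖a‖⁻¹ • a), b - a⟫ = (2 * ‖a‖)⁻¹ * (‖b - a‖ ^ 2 + (‖a‖ ^ 2 - ‖b‖ ^ 2)) := by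
        rw [← smul_neg, real_inner_smul_left, norm_sub_sq_real, inner_neg_left, inner_sub_right,
          real_inner_self_eq_norm_sq, real_inner_comm]
        field_simp
        ring
    _ ≤ (2 * ‖a‖)⁻¹ * (‖b - a‖ ^ 2 + 2 * ‖a‖ * c) := by gcongr
    _ = c + (2 * ‖a‖)⁻¹ * ‖b - a‖ ^ 2 := by field_simp; ring

theorem exists_frechetNormal_near_of_neg_inner_le [ProperSpace E] [ProperSpace F]
    {Ω : Set (E × F)} (hΩ : IsClosed Ω) {p : E × F} (hp : p ∈ Ω) {v : F} {κ l t : ℝ}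
    (hκ : 0 ≤ κ) (ht : 0 < t) (htl : 4 * t * l ≤ 1)
    (h : ∀ q ∈ Ω, ⟪-v, q.2 - p.2⟫ ≤ κ * ‖q.1 - p.1‖ + l * ‖q.2 - p.2‖ ^ 2) :
    ∃ π ∈ Ω, ∃ ξ ∈ frechetNormalCone2 Ω π, ‖π.1 - p.1‖ ≤ 2 * t * κ ∧
      ‖π.2 - p.2‖ ≤ 2 * t * κ ∧ ‖ξ.1‖ ≤ 2 * κ ∧ ‖ξ.2 + v‖ ≤ 2 * κ := by
  set z := p.2 - t • v
  set C := ‖p.1 - p.1‖ ^ 2 + ‖p.2 - z‖ ^ 2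
  have hbdd : Bornology.IsBounded {q : E × F | ‖q.1 - p.1‖ ^ 2 + ‖q.2 - z‖ ^ 2 ≤ C} := by
    refine (isBounded_closedBall (x := p.1) (r := √C)).prod
      (isBounded_closedBall (x := z) (r := √C)) |>.subset fun q hq => ⟨?_, ?_⟩
    · simpa [dist_eq_norm] using Real.abs_le_sqrt (x := ‖q.1 - p.1‖) (y := C)
        (by nlinarith [hq.out, sq_nonneg ‖q.2 - z‖])
    · simpa [dist_eq_norm] using Real.abs_le_sqrt (x := ‖q.2 - z‖) (y := C)
        (by nlinarith [hq.out, sq_nonneg ‖q.1 - p.1‖])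
  obtain ⟨π, hπ, hmin⟩ := exists_isMinOn_of_isBounded_sublevel hΩ (by fun_prop) hp hbdd
  set D₁ := ‖π.1 - p.1‖
  set D₂ := ‖π.2 - p.2‖
  have hproj : D₁ ^ 2 + D₂ ^ 2 ≤ 2 * t * ⟪-v, π.2 - p.2⟫ := by
    have hle : D₁ ^ 2 + ‖π.2 - z‖ ^ 2 ≤ C := hmin hp
    have hexp : π.2 - z = (π.2 - p.2) + t • v := by simp only [z]; abel
    rw [hexp, norm_add_sq_real, real_inner_smul_right, norm_smul, Real.norm_of_nonneg ht.le] at hle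
    simp only [C, z, sub_self, norm_zero, sub_sub_cancel, norm_smul,
      Real.norm_of_nonneg ht.le] at hle
    rw [inner_neg_left, real_inner_comm]
    nlinarith
  -- `h` at `π` bounds the right side of `hproj`, and `4 * t * l ≤ 1` absorbs its quadratic term.
  have hkey : D₁ ^ 2 + D₂ ^ 2 / 2 ≤ 2 * t * κ * D₁ := by
    nlinarith [h π hπ, mul_nonneg (sub_nonneg.2 htl) (sq_nonneg D₂)]
  have hD₁ : D₁ ≤ 2 * t * κ := by nlinarith [sq_nonneg D₂, mul_nonneg ht.le hκ]
  have hD₂ : D₂ ≤ 2 * t * κ := by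
    nlinarith [norm_nonneg (π.2 - p.2), sq_nonneg (D₁ - t * κ), mul_nonneg ht.le hκ]
  refine ⟨π, hπ, t⁻¹ • (p.1 - π.1, z - π.2), ?_, hD₁, hD₂, ?_, ?_⟩
  · exact mem_frechetNormalCone2_of_proximal hπ t⁻¹ fun q hq => by
      simpa [inner_smul_left, mul_add] using
        mul_le_mul_of_nonneg_left (inner_sub_add_inner_sub_le_of_isMinOn hmin hq)
          (inv_nonneg.2 ht.le)
  · rw [Prod.smul_fst, norm_smul, Real.norm_of_nonneg (inv_nonneg.2 ht.le), norm_sub_rev,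
      inv_mul_le_iff₀ ht]
    linarith
  · have hξ₂ : t⁻¹ • (z - π.2) + v = t⁻¹ • (p.2 - π.2) := by
      simp only [z, smul_sub, smul_smul, inv_mul_cancel₀ ht.ne', one_smul]
      abel
    rw [Prod.smul_snd, hξ₂, norm_smul, Real.norm_of_nonneg (inv_nonneg.2 ht.le), norm_sub_rev,
      inv_mul_le_iff₀ ht]
    linarith

theorem exists_frechetNormal_of_notMem_image_closedBall [ProperSpace E] [ProperSpace F]
    {S : E → Set F} (hS : IsClosed (svGraph S)) {x : E} {y : F} {r μ : ℝ} (hr : 0 < r)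
    (hμ : 0 < μ) (hμ₂ : μ ≤ 1 / 2) (hy : y ∈ S x + closedBall (0 : F) (μ * r))
    (hy' : y ∉ ⋃ x' ∈ closedBall x r, S x') :
    ∃ p, ∃ ξ ∈ frechetNormalCone2 (svGraph S) p, ∃ v : F, ‖v‖ = 1 ∧
      ‖p.1 - x‖ ≤ r ∧ ‖p.2 - y‖ ≤ r ∧ ‖ξ.1‖ ≤ 4 * μ ∧ ‖ξ.2 + v‖ ≤ 4 * μ := by
  obtain ⟨z, hz, w, hw, hzw⟩ := hy
  set f : E × F → ℝ := fun q => ‖q.2 - y‖ + 2 * μ * ‖q.1 - x‖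
  have hfz : f (x, z) ≤ μ * r := by simpa [f, ← hzw] using hw
  have hbdd : Bornology.IsBounded {q | f q ≤ f (x, z)} := by
    refine (isBounded_closedBall (x := x) (r := r)).prod
      (isBounded_closedBall (x := y) (r := μ * r)) |>.subset fun q hq => ⟨?_, ?_⟩
    · simp only [mem_closedBall, dist_eq_norm]
      nlinarith [hq.out, norm_nonneg (q.2 - y)]
    · simp only [mem_closedBall, dist_eq_norm]
      nlinarith [hq.out, norm_nonneg (q.1 - x)]
  obtain ⟨p, hp, hmin⟩ := exists_isMinOn_of_isBounded_sublevel hS (by fun_prop) hz hbdd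
  have hfp : f p ≤ μ * r := (hmin hz).trans hfz
  have hpx : ‖p.1 - x‖ ≤ r / 2 := by nlinarith [norm_nonneg (p.2 - y)]
  have hpy : p.2 - y ≠ 0 := by
    refine sub_ne_zero.2 fun h => hy' (mem_iUnion₂.2 ⟨p.1, ?_, h ▸ hp⟩)
    rw [mem_closedBall, dist_eq_norm]
    linarith
  set d := ‖p.2 - y‖
  have hd : 0 < d := norm_pos_iff.2 hpy
  have hdr : d ≤ μ * r := by nlinarith [norm_nonneg (p.1 - x)]
  have hdecay : ∀ q ∈ svGraph S, ⟪-(d⁻¹ • (p.2 - y)), q.2 - p.2⟫ ≤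
      2 * μ * ‖q.1 - p.1‖ + (2 * d)⁻¹ * ‖q.2 - p.2‖ ^ 2 := by
    intro q hq
    have hfq : f p ≤ f q := hmin hq
    have htri := norm_sub_le_norm_sub_add_norm_sub q.1 p.1 x
    simpa using neg_inner_smul_inv_norm_sub_le hpy (b := q.2 - y) (by positivity)
      (by simp only [f] at hfq; nlinarith)
  obtain ⟨π, hπ, ξ, hξ, hπ₁, hπ₂, hξ₁, hξ₂⟩ :=
    exists_frechetNormal_near_of_neg_inner_le hS hp (by positivity) (half_pos hd)
      (by field_simp; linarith) hdecay
  refine ⟨π, ξ, hξ, d⁻¹ • (p.2 - y), norm_smul_inv_norm hpy, ?_, ?_, by linarith, by linarith⟩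
  · have := norm_sub_le_norm_sub_add_norm_sub π.1 p.1 x
    nlinarith
  · have := norm_sub_le_norm_sub_add_norm_sub π.2 p.2 y
    nlinarith

theorem exists_norm_eq_one_zero_mem_coderivAtInfty [ProperSpace F] {S : E → Set F} {ybar : F}
    (h : ∀ (R δ : ℝ), 0 < δ → ∃ p, ∃ ξ ∈ frechetNormalCone2 (svGraph S) p, ∃ v : F, ‖v‖ = 1 ∧
      R ≤ ‖p.1‖ ∧ ‖p.2 - ybar‖ ≤ δ ∧ ‖ξ.1‖ ≤ δ ∧ ‖ξ.2 + v‖ ≤ δ) :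
    ∃ u : F, ‖u‖ = 1 ∧ (0 : E) ∈ coderivAtInfty S ybar u := by
  choose p ξ hξ v hv hR hy hξ₁ hξ₂ using
    fun k : ℕ => h k (1 / ((k : ℝ) + 1)) Nat.one_div_pos_of_nat
  obtain ⟨u, hu, φ, hφ, hvφ⟩ := (isCompact_sphere (0 : F) 1).tendsto_subseq
    (x := v) fun k => mem_sphere_zero_iff_norm.2 (hv k)
  have hδ : Tendsto (fun k => 1 / ((φ k : ℝ) + 1)) atTop (𝓝 0) :=
    tendsto_one_div_add_atTop_nhds_zero_nat.comp hφ.tendsto_atTop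
  refine ⟨u, mem_sphere_zero_iff_norm.1 hu, p ∘ φ, ξ ∘ φ, fun k => (hξ _).1, ?_, ?_,
    fun k => hξ _, ?_⟩
  · refine tendsto_atTop_mono (fun k => ?_) tendsto_natCast_atTop_atTop
    exact (Nat.cast_le.2 (hφ.id_le k)).trans (hR (φ k))
  · exact tendsto_iff_norm_sub_tendsto_zero.2
      (squeeze_zero (fun _ => norm_nonneg _) (fun k => hy (φ k)) hδ)
  · refine Tendsto.prodMk_nhds (squeeze_zero_norm (fun k => hξ₁ (φ k)) hδ) ?_
    have hsum : Tendsto (fun k => (ξ (φ k)).2 + v (φ k)) atTop (𝓝 0) :=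
      squeeze_zero_norm (fun k => hξ₂ (φ k)) hδ
    simpa using hsum.sub hvφ

theorem stmt10_general {n m : ℕ} (S : Eucl n → Set (Eucl m)) (hS : IsClosed (svGraph S))
    (ybar : Eucl m)
    (hker : {v : Eucl m | (0 : Eucl n) ∈ coderivAtInfty S ybar v} = {0}) :
    ∃ R > (0:ℝ), ∃ μ > (0:ℝ), ∃ ε > (0:ℝ), ∃ V ∈ 𝓝 ybar,
      ∀ (x : Eucl n) (r : ℝ), R < ‖x‖ → 0 < r → r < ε →
        (S x + closedBall (0 : Eucl m) (μ * r)) ∩ V ⊆ ⋃ x' ∈ closedBall x r, S x' := by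
  by_contra hopen
  push Not at hopen
  obtain ⟨u, hu, hu0⟩ : ∃ u : Eucl m, ‖u‖ = 1 ∧ (0 : Eucl n) ∈ coderivAtInfty S ybar u := by
    refine exists_norm_eq_one_zero_mem_coderivAtInfty fun R δ hδ => ?_
    obtain ⟨x, r, hx, hr, hrδ, hns⟩ := hopen (|R| + δ) (by positivity) (min (δ / 4) (1 / 2))
      (by positivity) (δ / 2) (by positivity) (ball ybar (δ / 2)) (ball_mem_nhds _ (by positivity))
    obtain ⟨y, ⟨hyS, hyV⟩, hy'⟩ := not_subset.1 hns
    obtain ⟨p, ξ, hξ, v, hv, hpx, hpy, hξ₁, hξ₂⟩ :=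
      exists_frechetNormal_of_notMem_image_closedBall hS hr (by positivity) (min_le_right _ _)
        hyS hy'
    have hμ : 4 * min (δ / 4) (1 / 2) ≤ δ := by linarith [min_le_left (δ / 4) (1 / 2)]
    refine ⟨p, ξ, hξ, v, hv, ?_, ?_, hξ₁.trans hμ, hξ₂.trans hμ⟩
    · linarith [norm_sub_norm_le x p.1, norm_sub_rev x p.1, le_abs_self R]
    · linarith [norm_sub_le_norm_sub_add_norm_sub p.2 y ybar, mem_ball_iff_norm.1 hyV]
  have : u ∈ ({0} : Set (Eucl m)) := hker ▸ hu0
  simp [mem_singleton_iff.1 this] at hu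

/-- coderivative nonsingularity at infinity implies linear openness
at infinity. -/
theorem stmt10 {n m : ℕ} (S : Eucl n → Set (Eucl m)) (hS : IsClosed (svGraph S))
    (ybar : Eucl m) (hJ : ybar ∈ jelonek S)
    (hker : {v : Eucl m | (0 : Eucl n) ∈ coderivAtInfty S ybar v} = {0}) :
    ∃ R > (0:ℝ), ∃ μ > (0:ℝ), ∃ ε > (0:ℝ), ∃ V ∈ 𝓝 ybar,
      ∀ (x : Eucl n) (r : ℝ), R < ‖x‖ → 0 < r → r < ε →
        (S x + closedBall (0 : Eucl m) (μ * r)) ∩ V ⊆ ⋃ x' ∈ closedBall x r, S x' :=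
  stmt10_general S hS ybar hker
end
end

section
/- Let F : ℝ^n ⇉ ℝ^m be a set-valued mapping with closed graph and ȳ ∈ J(F). If F is linearly open at infinity around (∞, ȳ) — i.e., there exist constants R > 0, μ > 0, ε > 0 and a neighborhood V of ȳ in ℝ^m such that (F(x) + μr𝔹) ∩ V ⊆ F(x + r𝔹) for every x with ‖x‖ > R and every r ∈ (0, ε) — then F is metrically regular at infinity around (∞, ȳ): there exist constants R' > 0, ℓ > 0, γ > 0 and a neighborhood V' of ȳ such that dist(x, F⁻¹(y)) ≤ ℓ·dist(y, F(x)) for all x with ‖x‖ > R' and all y ∈ V' with dist(y, F(x)) < γ. -/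
open Filter Topology Set Metric Pointwise
open scoped RealInnerProductSpace ENNReal

noncomputable section

variable {E F G : Type*}
  [NormedAddCommGroup E] [InnerProductSpace ℝ E]
  [NormedAddCommGroup F] [InnerProductSpace ℝ F]
  [NormedAddCommGroup G] [InnerProductSpace ℝ G]

/-!
Given `x` and `y ∈ V` with `d = dist(y, F(x))` small, every `r` with `d < μ r < μ ε` puts `y`
into `F(x) + μ r 𝔹`, so linear openness yields a point of `F⁻¹(y)` within `r` of `x`.
Letting `r ↓ d / μ` gives `dist(x, F⁻¹(y)) ≤ μ⁻¹ dist(y, F(x))`, also when `d = 0`.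
-/

section LinearOpenness

variable {X Y : Type*} [PseudoMetricSpace X] [SeminormedAddCommGroup Y]
  {S : X → Set Y} {V : Set Y} {x : X} {y : Y} {μ ε : ℝ}

theorem mem_add_closedBall_zero_of_infEDist_lt {s : Set Y} {δ : ℝ}
    (h : infEDist y s < ENNReal.ofReal δ) : y ∈ s + closedBall (0 : Y) δ := by
  obtain ⟨y', hy's, hyy'⟩ := infEDist_lt_iff.1 h
  refine ⟨y', hy's, y - y', ?_, add_sub_cancel y' y⟩
  rw [mem_closedBall, dist_zero_right, ← dist_eq_norm]
  exact (edist_lt_ofReal.1 hyy').le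

theorem infEDist_fiber_le_of_subset_iUnion_closedBall {r : ℝ}
    (hopen : (S x + closedBall (0 : Y) (μ * r)) ∩ V ⊆ ⋃ x' ∈ closedBall x r, S x')
    (hy : y ∈ V) (hd : infEDist y (S x) < ENNReal.ofReal (μ * r)) :
    infEDist x {x' | y ∈ S x'} ≤ ENNReal.ofReal r := by
  obtain ⟨x', hx'x, hyx'⟩ := mem_iUnion₂.1 <|
    hopen ⟨mem_add_closedBall_zero_of_infEDist_lt hd, hy⟩
  have hxx' : dist x x' ≤ r := mem_closedBall'.1 hx'x
  calc infEDist x {x' | y ∈ S x'} ≤ edist x x' := infEDist_le_edist_of_mem hyx'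
    _ ≤ ENNReal.ofReal r := (edist_le_ofReal (dist_nonneg.trans hxx')).2 hxx'

theorem infEDist_fiber_le_of_linearOpen (hμ : 0 < μ)
    (hopen : ∀ r, 0 < r → r < ε →
      (S x + closedBall (0 : Y) (μ * r)) ∩ V ⊆ ⋃ x' ∈ closedBall x r, S x')
    (hy : y ∈ V) (hd : infEDist y (S x) < ENNReal.ofReal (μ * ε)) :
    infEDist x {x' | y ∈ S x'} ≤ ENNReal.ofReal μ⁻¹ * infEDist y (S x) := by
  set d := (infEDist y (S x)).toReal
  have hD : infEDist y (S x) = ENNReal.ofReal d := (ENNReal.ofReal_toReal hd.ne_top).symm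
  have hd₀ : 0 ≤ d := ENNReal.toReal_nonneg
  have hdε : μ⁻¹ * d < ε := by
    rw [hD, ENNReal.ofReal_lt_ofReal_iff_of_nonneg hd₀] at hd
    rwa [inv_mul_lt_iff₀ hμ]
  have hμd : 0 ≤ μ⁻¹ * d := mul_nonneg (inv_nonneg.2 hμ.le) hd₀
  rw [hD, ← ENNReal.ofReal_mul (inv_nonneg.2 hμ.le)]
  refine ge_of_tendsto (ENNReal.continuous_ofReal.continuousWithinAt (s := Ioi (μ⁻¹ * d))) ?_
  filter_upwards [Ioo_mem_nhdsGT hdε] with r ⟨hdr, hrε⟩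
  refine infEDist_fiber_le_of_subset_iUnion_closedBall (hopen r (hμd.trans_lt hdr) hrε) hy ?_
  rw [hD, ENNReal.ofReal_lt_ofReal_iff_of_nonneg hd₀]
  rwa [← inv_mul_lt_iff₀ hμ]

end LinearOpenness

theorem stmt11_general {n m : ℕ} (S : Eucl n → Set (Eucl m))
    (ybar : Eucl m)
    (hopen : ∃ R > (0:ℝ), ∃ μ > (0:ℝ), ∃ ε > (0:ℝ), ∃ V ∈ 𝓝 ybar,
      ∀ (x : Eucl n) (r : ℝ), R < ‖x‖ → 0 < r → r < ε →
        (S x + closedBall (0 : Eucl m) (μ * r)) ∩ V ⊆ ⋃ x' ∈ closedBall x r, S x') :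
    ∃ R' > (0:ℝ), ∃ ℓ > (0:ℝ), ∃ γ > (0:ℝ), ∃ V' ∈ 𝓝 ybar,
      ∀ (x : Eucl n) (y : Eucl m), R' < ‖x‖ → y ∈ V' →
        EMetric.infEdist y (S x) < ENNReal.ofReal γ →
        EMetric.infEdist x (svInv S y) ≤ ENNReal.ofReal ℓ * EMetric.infEdist y (S x) := by
  obtain ⟨R, hR, μ, hμ, ε, hε, V, hV, hopen⟩ := hopen
  refine ⟨R, hR, μ⁻¹, inv_pos.2 hμ, μ * ε, mul_pos hμ hε, V, hV, ?_⟩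
  intro x y hx hy hd
  exact infEDist_fiber_le_of_linearOpen hμ (hopen x · hx) hy hd

/-- linear openness at infinity implies metric regularity at infinity. -/
theorem stmt11 {n m : ℕ} (S : Eucl n → Set (Eucl m)) (hS : IsClosed (svGraph S))
    (ybar : Eucl m) (hJ : ybar ∈ jelonek S)
    (hopen : ∃ R > (0:ℝ), ∃ μ > (0:ℝ), ∃ ε > (0:ℝ), ∃ V ∈ 𝓝 ybar,
      ∀ (x : Eucl n) (r : ℝ), R < ‖x‖ → 0 < r → r < ε →
        (S x + closedBall (0 : Eucl m) (μ * r)) ∩ V ⊆ ⋃ x' ∈ closedBall x r, S x') :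
    ∃ R' > (0:ℝ), ∃ ℓ > (0:ℝ), ∃ γ > (0:ℝ), ∃ V' ∈ 𝓝 ybar,
      ∀ (x : Eucl n) (y : Eucl m), R' < ‖x‖ → y ∈ V' →
        EMetric.infEdist y (S x) < ENNReal.ofReal γ →
        EMetric.infEdist x (svInv S y) ≤ ENNReal.ofReal ℓ * EMetric.infEdist y (S x) :=
  stmt11_general S ybar hopen
end
end

section
/- Let F : ℝ^n ⇉ ℝ^m be a set-valued mapping with closed graph and ȳ ∈ J(F). If F is metrically regular at infinity around (∞, ȳ) — i.e., there exist constants R > 0, ℓ > 0, γ > 0 and a neighborhood V of ȳ such that dist(x, F⁻¹(y)) ≤ ℓ·dist(y, F(x)) for all x with ‖x‖ > R and all y ∈ V with dist(y, F(x)) < γ — then F⁻¹ is Lipschitz-like at infinity around (ȳ, ∞): there exist constants R' > 0, ℓ' > 0 and a neighborhood V' of ȳ such that F⁻¹(y') ∩ (ℝ^n \ 𝔹_{R'}) ⊆ F⁻¹(y) + ℓ'‖y' − y‖𝔹 for all y, y' ∈ V'. -/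
open Filter Topology Set Metric Pointwise
open scoped RealInnerProductSpace ENNReal

noncomputable section

variable {E F G : Type*}
  [NormedAddCommGroup E] [InnerProductSpace ℝ E]
  [NormedAddCommGroup F] [InnerProductSpace ℝ F]
  [NormedAddCommGroup G] [InnerProductSpace ℝ G]

/-- metric regularity at infinity implies the inverse is
Lipschitz-like at infinity. -/
theorem stmt12 {n m : ℕ} (S : Eucl n → Set (Eucl m)) (hS : IsClosed (svGraph S))
    (ybar : Eucl m) (hJ : ybar ∈ jelonek S)
    (hreg : ∃ R > (0:ℝ), ∃ ℓ > (0:ℝ), ∃ γ > (0:ℝ), ∃ V ∈ 𝓝 ybar,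
      ∀ (x : Eucl n) (y : Eucl m), R < ‖x‖ → y ∈ V →
        EMetric.infEdist y (S x) < ENNReal.ofReal γ →
        EMetric.infEdist x (svInv S y) ≤ ENNReal.ofReal ℓ * EMetric.infEdist y (S x)) :
    ∃ R' > (0:ℝ), ∃ ℓ' > (0:ℝ), ∃ V' ∈ 𝓝 ybar,
      ∀ y ∈ V', ∀ y' ∈ V', ∀ x ∈ svInv S y', R' < ‖x‖ →
        x ∈ svInv S y + closedBall (0 : Eucl n) (ℓ' * ‖y' - y‖) := by
  obtain ⟨R, hR, ℓ, hℓ, γ, hγ, V, hV, hmain⟩ := hreg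
  refine ⟨R, hR, 2 * ℓ, by linarith, V ∩ ball ybar (γ / 2),
    Filter.inter_mem hV (ball_mem_nhds _ (by linarith)), ?_⟩
  rintro y ⟨hyV, hyB⟩ y' ⟨hy'V, hy'B⟩ x hx hxR
  by_cases hyy : y' = y
  · subst hyy
    refine ⟨x, hx, 0, ?_, add_zero x⟩
    simp [mem_closedBall, mul_nonneg (by linarith : (0:ℝ) ≤ 2 * ℓ) (norm_nonneg _)]
  · have hd : (0:ℝ) < ‖y' - y‖ := by
      simpa [sub_eq_zero] using norm_sub_pos_iff.2 hyy
    have hyy' : ‖y - y'‖ < γ := by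
      have := dist_triangle y ybar y'
      rw [mem_ball] at hyB hy'B
      rw [dist_comm ybar y'] at this
      calc ‖y - y'‖ = dist y y' := (dist_eq_norm _ _).symm
        _ < γ := by linarith
    have hle : EMetric.infEdist y (S x) ≤ ENNReal.ofReal ‖y - y'‖ := by
      have := EMetric.infEdist_le_edist_of_mem (x := y) hx
      rwa [edist_dist, dist_eq_norm] at this
    have hlt : EMetric.infEdist y (S x) < ENNReal.ofReal γ :=
      lt_of_le_of_lt hle (ENNReal.ofReal_lt_ofReal_iff hγ |>.2 hyy')
    have key := hmain x y hxR hyV hlt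
    have key2 : EMetric.infEdist x (svInv S y) < ENNReal.ofReal (2 * ℓ * ‖y' - y‖) := by
      calc EMetric.infEdist x (svInv S y)
          ≤ ENNReal.ofReal ℓ * ENNReal.ofReal ‖y - y'‖ :=
            key.trans (mul_le_mul_right hle _)
        _ = ENNReal.ofReal (ℓ * ‖y' - y‖) := by
            rw [← ENNReal.ofReal_mul hℓ.le, norm_sub_rev]
        _ < ENNReal.ofReal (2 * ℓ * ‖y' - y‖) := by
            apply (ENNReal.ofReal_lt_ofReal_iff (by positivity)).2
            nlinarith
    obtain ⟨z, hz, hdz⟩ := EMetric.infEdist_lt_iff.1 key2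
    refine ⟨z, hz, x - z, ?_, by simp⟩
    rw [mem_closedBall, dist_zero_right]
    have : dist x z < 2 * ℓ * ‖y' - y‖ := by
      rw [edist_dist] at hdz
      exact (ENNReal.ofReal_lt_ofReal_iff_of_nonneg dist_nonneg).1 hdz
    rw [← dist_eq_norm]
    linarith
end
end
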